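/- Let N ≥ 5 and assume moreover that {·,·}_{C2N} and {·,·}_{S2} each satisfy the Jacobi identity on F = ℝ(B_1,…,B_N). Then for every λ ∈ ℝ the bracket {f,g}_λ := {f,g}_{C2N} + λ·{f,g}_{S2} satisfies the Jacobi identity: {{f,g}_λ, h}_λ + {{g,h}_λ, f}_λ + {{h,f}_λ, g}_λ = 0 for all f, g, h ∈ F. -/

import Mathlib

/-!
The Jacobiator of `{·,·}_C + λ {·,·}_S` is `J_C + λ M + λ² J_S`, where `J_C`, `J_S` are the
Jacobiators of the two brackets and `M` is their mixed Jacobiator, so it suffices that `M = 0`.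
For two biderivations `M` is alternating and a derivation in each argument, and a derivation of
`ℝ(B_1, …, B_N)` is determined by its values on the generators, so it is enough to check
`M(B_i, B_j, B_k) = 0`.

Call two indices near if they differ by `±1` or `±2`. If one index of the triple is near
neither of the others, every term of `M` vanishes, because `{B_i, B_j}_C` involves only
`B_{i-1}, B_i, B_{i+1}, B_j`. Otherwise some index is near both others, and up to a permutation
the triple is `(a, a+p, a+p+q)` with `p, q ∈ {1, 2}`; on these four shapes `M` is computed
directly. For `N = 5, 6` the indices wrap around and the outer pair `(a+p+q, a)` may be near as
well, which adds one more nonzero bracket to the computation.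
-/

noncomputable section

/-- The field `F = ℝ(B_1, …, B_N)` of rational functions in `N` variables
indexed by `ZMod N` (indices read modulo `N`). -/
abbrev RatF (N : ℕ) : Type := FractionRing (MvPolynomial (ZMod N) ℝ)

/-- The generator `B_i` of `ℝ(B_1, …, B_N)`. -/
noncomputable def Bgen (N : ℕ) (i : ZMod N) : RatF N :=
  algebraMap (MvPolynomial (ZMod N) ℝ) (RatF N) (MvPolynomial.X i)

theorem Derivation.eq_zero_of_isFractionRing {R A K : Type*} [CommRing R] [CommRing A]
    [Field K] [Algebra R K] [Algebra A K] [IsFractionRing A K] (D : Derivation R K K)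
    (h : ∀ a : A, D (algebraMap A K a) = 0) : D = 0 := by
  ext z
  obtain ⟨p, q, -, rfl⟩ := IsFractionRing.div_surjective (A := A) z
  simp [D.leibniz_div, h]

theorem MvPolynomial.derivation_fractionRing_ext {R σ : Type*} [CommRing R] [IsDomain R]
    (D : Derivation R (FractionRing (MvPolynomial σ R)) (FractionRing (MvPolynomial σ R)))
    (h : ∀ i, D (algebraMap (MvPolynomial σ R) _ (X i)) = 0) : D = 0 :=
  D.eq_zero_of_isFractionRing (A := MvPolynomial σ R) fun p =>
    DFunLike.congr_fun (MvPolynomial.derivation_ext h : D.compAlgebraMap (MvPolynomial σ R) = 0) p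

section Biderivation

variable {R K : Type*} [CommRing R] [Field K] [Algebra R K]

variable (R) in
structure IsBiderivation (b : K → K → K) : Prop where
  add_left : ∀ x y z, b (x + y) z = b x z + b y z
  smul_left : ∀ (c : R) x y, b (c • x) y = c • b x y
  antisymm : ∀ x y, b x y = -b y x
  mul_left : ∀ x y z, b (x * y) z = x * b y z + y * b x z

namespace IsBiderivation

variable {b : K → K → K}

def toDerivation (hb : IsBiderivation R b) (z : K) : Derivation R K K :=
  Derivation.mk' ⟨⟨(b · z), (hb.add_left · · z)⟩, (hb.smul_left · · z)⟩ (hb.mul_left · · z)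

@[simp] lemma toDerivation_apply (hb : IsBiderivation R b) (x z : K) :
    hb.toDerivation z x = b x z := rfl

lemma zero_left (hb : IsBiderivation R b) (z : K) : b 0 z = 0 :=
  (hb.toDerivation z).map_zero

lemma neg_left (hb : IsBiderivation R b) (x z : K) : b (-x) z = -b x z :=
  (hb.toDerivation z).map_neg x

lemma sub_left (hb : IsBiderivation R b) (x y z : K) : b (x - y) z = b x z - b y z :=
  (hb.toDerivation z).map_sub x y

lemma div_left (hb : IsBiderivation R b) (x y z : K) :
    b (x / y) z = (y * b x z - x * b y z) / y ^ 2 := by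
  rw [← hb.toDerivation_apply, Derivation.leibniz_div, div_eq_inv_mul, inv_pow]
  rfl

lemma add_right (hb : IsBiderivation R b) (x y z : K) : b z (x + y) = b z x + b z y := by
  rw [hb.antisymm, hb.add_left, neg_add, ← hb.antisymm, ← hb.antisymm]

lemma smul_right (hb : IsBiderivation R b) (c : R) (x z : K) : b z (c • x) = c • b z x := by
  rw [hb.antisymm, hb.smul_left, hb.antisymm x, smul_neg, neg_neg]

lemma mul_right (hb : IsBiderivation R b) (x y z : K) :
    b z (x * y) = x * b z y + y * b z x := by
  rw [hb.antisymm, hb.mul_left, hb.antisymm y, hb.antisymm x]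
  ring

lemma self [CharZero K] (hb : IsBiderivation R b) (x : K) : b x x = 0 :=
  self_eq_neg.mp (hb.antisymm x x)

lemma apply_swap_eq (hb : IsBiderivation R b) {x y v : K} (h : b x y = v) : b y x = -v := by
  rw [hb.antisymm, h]

end IsBiderivation

def jacobiator (b : K → K → K) (f g h : K) : K :=
  b (b f g) h + b (b g h) f + b (b h f) g

def mixedJacobiator (bC bS : K → K → K) (f g h : K) : K :=
  bC (bS f g) h + bS (bC f g) h + bC (bS g h) f + bS (bC g h) f + bC (bS h f) g +
    bS (bC h f) g

variable {bC bS : K → K → K}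

lemma jacobiator_add_smul (hC : IsBiderivation R bC) (hS : IsBiderivation R bS) (l : R)
    (f g h : K) :
    jacobiator (fun x y => bC x y + l • bS x y) f g h =
      jacobiator bC f g h + l • mixedJacobiator bC bS f g h + (l * l) • jacobiator bS f g h := by
  simp only [jacobiator, mixedJacobiator, hC.add_left, hS.add_left, hC.smul_left,
    hS.smul_left, smul_add, mul_smul]
  abel

lemma mixedJacobiator_rotate (f g h : K) :
    mixedJacobiator bC bS f g h = mixedJacobiator bC bS g h f := by
  unfold mixedJacobiator
  ring

lemma mixedJacobiator_swap (hC : IsBiderivation R bC) (hS : IsBiderivation R bS) (f g h : K) :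
    mixedJacobiator bC bS f g h = -mixedJacobiator bC bS g f h := by
  simp only [mixedJacobiator, hS.antisymm g f, hC.antisymm g f, hS.antisymm f h,
    hC.antisymm f h, hS.antisymm h g, hC.antisymm h g, hC.neg_left, hS.neg_left]
  ring

lemma mixedJacobiator_swap_right (hC : IsBiderivation R bC) (hS : IsBiderivation R bS)
    (f g h : K) : mixedJacobiator bC bS f g h = -mixedJacobiator bC bS f h g := by
  rw [mixedJacobiator_rotate, mixedJacobiator_swap hC hS, ← mixedJacobiator_rotate]

lemma mixedJacobiator_swap_outer (hC : IsBiderivation R bC) (hS : IsBiderivation R bS)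
    (f g h : K) : mixedJacobiator bC bS f g h = -mixedJacobiator bC bS h g f := by
  rw [mixedJacobiator_rotate, mixedJacobiator_swap hC hS]

lemma mixedJacobiator_self [CharZero K] (hC : IsBiderivation R bC) (hS : IsBiderivation R bS)
    (f h : K) : mixedJacobiator bC bS f f h = 0 :=
  self_eq_neg.mp (mixedJacobiator_swap hC hS f f h)

def mixedJacobiatorDerivation (hC : IsBiderivation R bC) (hS : IsBiderivation R bS)
    (g h : K) : Derivation R K K :=
  Derivation.mk'
    { toFun := fun f => mixedJacobiator bC bS f g h
      map_add' := fun x y => by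
        simp only [mixedJacobiator, hC.add_left, hS.add_left, hC.add_right, hS.add_right]
        ring
      map_smul' := fun c x => by
        simp only [mixedJacobiator, hC.smul_left, hS.smul_left, hC.smul_right,
          hS.smul_right, RingHom.id_apply, smul_add] }
    fun x y => by
      simp only [LinearMap.coe_mk, AddHom.coe_mk, mixedJacobiator, hC.mul_left, hS.mul_left,
        hC.mul_right, hS.mul_right, hC.add_left, hS.add_left, hC.antisymm h x, hC.antisymm h y,
        hS.antisymm h x, hS.antisymm h y, hC.neg_left, hS.neg_left, smul_eq_mul]
      ring

theorem mixedJacobiator_eq_zero_of_generators (hC : IsBiderivation R bC)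
    (hS : IsBiderivation R bS) {ι : Type*} (B : ι → K)
    (hB : ∀ D : Derivation R K K, (∀ i, D (B i) = 0) → D = 0)
    (hgen : ∀ i j k, mixedJacobiator bC bS (B i) (B j) (B k) = 0) (f g h : K) :
    mixedJacobiator bC bS f g h = 0 := by
  have vanish : ∀ g h, (∀ i, mixedJacobiator bC bS (B i) g h = 0) →
      ∀ f, mixedJacobiator bC bS f g h = 0 := fun g h hg f =>
    DFunLike.congr_fun (hB (mixedJacobiatorDerivation hC hS g h) hg) f
  have two : ∀ i j h, mixedJacobiator bC bS (B i) (B j) h = 0 := fun i j h => by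
    rw [← mixedJacobiator_rotate]
    exact vanish _ _ (hgen · i j) h
  have one : ∀ i g h, mixedJacobiator bC bS (B i) g h = 0 := fun i g h => by
    rw [← mixedJacobiator_rotate]
    exact vanish _ _ (two · i g) h
  exact vanish g h (one · g h) f

-- The shapes `(x, y, z) = (B_a, B_{a+p}, B_{a+p+q})` with `p, q ∈ {1, 2}`; `m`, `n` are the
-- generators skipped in between and `w = B_{a+p+q+1}`. The scalar `t` switches on the bracket
-- of `z` and `x` across `w`, which is present only when `N = p + q + 2`.
lemma mixedJacobiator_window_one_one [CharZero K] (hC : IsBiderivation R bC)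
    (hS : IsBiderivation R bS) {x y z : K} (hy : y ≠ 0)
    (sxy : bS x y = x * y) (syz : bS y z = y * z) (szx : bS z x = 0)
    (cxy : bC x y = x * y - x - y) (cyz : bC y z = y * z - y - z)
    (cxz : bC x z = -(x * z) / y) :
    mixedJacobiator bC bS x y z = 0 := by
  simp only [mixedJacobiator, hC.antisymm z x, cxy, cyz, cxz, sxy, syz, szx,
    hS.apply_swap_eq sxy, hS.apply_swap_eq syz, hS.apply_swap_eq szx, hS.self,
    hC.apply_swap_eq cxy, hC.mul_left, hS.mul_left, hS.div_left, hS.sub_left, hS.neg_left,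
    hC.zero_left]
  field_simp
  ring

lemma mixedJacobiator_window_one_two (hC : IsBiderivation R bC)
    (hS : IsBiderivation R bS) {x y m z w : K} (hm : m ≠ 0) (hw : w ≠ 0) (t : R)
    (sxy : bS x y = x * y) (syz : bS y z = 0) (szx : bS z x = 0) (smx : bS m x = 0)
    (swy : bS w y = 0)
    (cxy : bC x y = x * y - x - y) (cyz : bC y z = -(y * z) / m)
    (czx : bC z x = t • (-(z * x) / w)) :
    mixedJacobiator bC bS x y z = 0 := by
  simp only [mixedJacobiator, cxy, cyz, czx, sxy, syz, szx, smx, swy, hS.apply_swap_eq sxy,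
    hS.apply_swap_eq syz, hS.apply_swap_eq szx, hC.apply_swap_eq czx, hC.mul_left,
    hS.mul_left, hS.div_left, hS.sub_left, hS.neg_left, hC.zero_left, hS.smul_left]
  simp only [Algebra.smul_def]
  field_simp
  ring

lemma mixedJacobiator_window_two_one (hC : IsBiderivation R bC)
    (hS : IsBiderivation R bS) {x m y z w : K} (hm : m ≠ 0) (hw : w ≠ 0) (t : R)
    (sxy : bS x y = 0) (syz : bS y z = y * z) (szx : bS z x = 0) (smz : bS m z = 0)
    (swy : bS w y = 0)
    (cxy : bC x y = -(x * y) / m) (cyz : bC y z = y * z - y - z)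
    (czx : bC z x = t • (-(z * x) / w)) :
    mixedJacobiator bC bS x y z = 0 := by
  simp only [mixedJacobiator, cxy, cyz, czx, sxy, syz, szx, smz, swy, hS.apply_swap_eq sxy,
    hS.apply_swap_eq syz, hS.apply_swap_eq szx, hC.apply_swap_eq cxy, hC.mul_left, hS.mul_left,
    hS.div_left, hS.sub_left, hS.neg_left, hC.zero_left, hS.smul_left]
  simp only [Algebra.smul_def]
  field_simp
  ring

lemma mixedJacobiator_window_two_two (hC : IsBiderivation R bC)
    (hS : IsBiderivation R bS) {x m y n z w : K} (hm : m ≠ 0) (hn : n ≠ 0) (hw : w ≠ 0)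
    (t : R) (sxy : bS x y = 0) (syz : bS y z = 0) (szx : bS z x = 0) (smz : bS m z = 0)
    (snx : bS n x = 0) (swy : bS w y = 0)
    (cxy : bC x y = -(x * y) / m) (cyz : bC y z = -(y * z) / n)
    (czx : bC z x = t • (-(z * x) / w)) :
    mixedJacobiator bC bS x y z = 0 := by
  simp only [mixedJacobiator, cxy, cyz, czx, sxy, syz, szx, smz, snx, swy, hS.apply_swap_eq sxy,
    hS.apply_swap_eq syz, hS.apply_swap_eq szx, hS.mul_left, hS.div_left, hS.neg_left,
    hC.zero_left, hS.smul_left]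
  simp only [Algebra.smul_def]
  field_simp
  ring

end Biderivation

section CyclicIndices

variable {N : ℕ}

def IsNear (d : ZMod N) : Prop := d = 1 ∨ d = -1 ∨ d = 2 ∨ d = -2

lemma isNear_sub_comm {i j : ZMod N} : IsNear (i - j) ↔ IsNear (j - i) := by
  rw [← neg_sub j i]
  simp only [IsNear, neg_eq_iff_eq_neg, neg_neg]
  tauto

lemma ZMod.intCast_ne_intCast_of_abs_sub_lt {d e : ℤ} (hde : d ≠ e) (h : |d - e| < N) :
    (d : ZMod N) ≠ e := by
  rw [Ne, ZMod.intCast_eq_intCast_iff_dvd_sub]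
  intro hd
  have := Int.eq_zero_of_abs_lt_dvd hd (by rwa [abs_sub_comm])
  omega

lemma ne_add_of_eq_add {i j : ZMod N} {d e : ℤ} (hj : j = i + d) (hde : d ≠ e)
    (h : |d - e| < N) : j ≠ i + e := by
  rw [hj, Ne, add_right_inj]
  exact ZMod.intCast_ne_intCast_of_abs_sub_lt hde h

lemma not_isNear_three (hN : 5 ≤ N) (h5 : (5 : ZMod N) ≠ 0) : ¬IsNear (3 : ZMod N) := by
  have ne (d e : ℤ) (hde : d ≠ e ∧ |d - e| < 5) : (d : ZMod N) ≠ e :=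
    ZMod.intCast_ne_intCast_of_abs_sub_lt hde.1 (by omega)
  rintro (h | h | h | h)
  · exact ne 3 1 (by norm_num) (by exact_mod_cast h)
  · exact ne 3 (-1) (by norm_num) (by exact_mod_cast h)
  · exact ne 3 2 (by norm_num) (by exact_mod_cast h)
  · exact h5 (by linear_combination h)

lemma not_isNear_four (hN : 5 ≤ N) (h5 : (5 : ZMod N) ≠ 0) (h6 : (6 : ZMod N) ≠ 0) :
    ¬IsNear (4 : ZMod N) := by
  have ne (d e : ℤ) (hde : d ≠ e ∧ |d - e| < 5) : (d : ZMod N) ≠ e :=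
    ZMod.intCast_ne_intCast_of_abs_sub_lt hde.1 (by omega)
  rintro (h | h | h | h)
  · exact ne 4 1 (by norm_num) (by exact_mod_cast h)
  · exact h5 (by linear_combination h)
  · exact ne 4 2 (by norm_num) (by exact_mod_cast h)
  · exact h6 (by linear_combination h)

lemma IsNear.exists_eq_add_intCast {i j : ZMod N} (h : IsNear (i - j)) :
    ∃ d : ℤ, (d ≠ 0 ∧ -2 ≤ d ∧ d ≤ 2) ∧ i = j + d := by
  rcases h with h | h | h | h
  · exact ⟨1, by norm_num, by push_cast; linear_combination h⟩
  · exact ⟨-1, by norm_num, by push_cast; linear_combination h⟩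
  · exact ⟨2, by norm_num, by push_cast; linear_combination h⟩
  · exact ⟨-2, by norm_num, by push_cast; linear_combination h⟩

lemma ne_add_of_not_isNear {i k : ZMod N} (h : ¬IsNear (k - i)) :
    k ≠ i + 1 ∧ k ≠ i - 1 ∧ k ≠ i + 2 ∧ k ≠ i - 2 := by
  simp only [IsNear, not_or] at h
  obtain ⟨h₁, h₂, h₃, h₄⟩ := h
  exact ⟨fun e => h₁ (by rw [e]; ring), fun e => h₂ (by rw [e]; ring),
    fun e => h₃ (by rw [e]; ring), fun e => h₄ (by rw [e]; ring)⟩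

end CyclicIndices

lemma Bgen_ne_zero (N : ℕ) (i : ZMod N) : Bgen N i ≠ 0 := by
  simp [Bgen, MvPolynomial.X_ne_zero]

structure IsC2NBracket (N : ℕ) (b : RatF N → RatF N → RatF N) : Prop
    extends IsBiderivation ℝ b where
  apply_succ : ∀ k : ZMod N,
    b (Bgen N k) (Bgen N (k + 1)) = Bgen N k * Bgen N (k + 1) - Bgen N k - Bgen N (k + 1)
  apply_add_two : ∀ k : ZMod N,
    b (Bgen N k) (Bgen N (k + 2)) = -(Bgen N k * Bgen N (k + 2)) / Bgen N (k + 1)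
  apply_eq_zero : ∀ i j : ZMod N,
    j - i ≠ 1 → j - i ≠ -1 → j - i ≠ 2 → j - i ≠ -2 → b (Bgen N i) (Bgen N j) = 0

structure IsS2Bracket (N : ℕ) (b : RatF N → RatF N → RatF N) : Prop
    extends IsBiderivation ℝ b where
  apply_Bgen : ∀ i j : ZMod N, b (Bgen N i) (Bgen N j) =
    ((if i + 1 = j then (1 : ℝ) else 0) - (if i - 1 = j then (1 : ℝ) else 0)) •
      (Bgen N i * Bgen N j)

namespace IsC2NBracket

variable {N : ℕ} {bC : RatF N → RatF N → RatF N}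

lemma apply_of_eq_add_one (hC : IsC2NBracket N bC) {i j : ZMod N} (hj : j = i + 1) :
    bC (Bgen N i) (Bgen N j) = Bgen N i * Bgen N j - Bgen N i - Bgen N j := by
  subst hj
  exact hC.apply_succ i

lemma apply_of_eq_add_two (hC : IsC2NBracket N bC) {i j m : ZMod N} (hj : j = i + 2)
    (hm : m = i + 1) : bC (Bgen N i) (Bgen N j) = -(Bgen N i * Bgen N j) / Bgen N m := by
  subst hj hm
  exact hC.apply_add_two i

lemma apply_eq_zero_of_not_isNear (hC : IsC2NBracket N bC) {i j : ZMod N}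
    (h : ¬IsNear (j - i)) : bC (Bgen N i) (Bgen N j) = 0 := by
  simp only [IsNear, not_or] at h
  exact hC.apply_eq_zero i j h.1 h.2.1 h.2.2.1 h.2.2.2

lemma derivation_apply_eq_zero (hC : IsC2NBracket N bC) (D : Derivation ℝ (RatF N) (RatF N))
    {i j : ZMod N} (hpred : D (Bgen N (i - 1)) = 0) (hi : D (Bgen N i) = 0)
    (hsucc : D (Bgen N (i + 1)) = 0) (hj : D (Bgen N j) = 0) :
    D (bC (Bgen N i) (Bgen N j)) = 0 := by
  rcases em (IsNear (j - i)) with (h | h | h | h) | h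
  · rw [hC.apply_of_eq_add_one (by linear_combination h)]
    simp [D.leibniz, hi, hj]
  · rw [hC.antisymm, hC.apply_of_eq_add_one (by linear_combination -h)]
    simp [D.leibniz, hi, hj]
  · rw [hC.apply_of_eq_add_two (by linear_combination h) rfl]
    simp [D.leibniz, D.leibniz_div, hi, hj, hsucc]
  · rw [hC.antisymm, hC.apply_of_eq_add_two (m := i - 1) (by linear_combination -h)
      (by linear_combination -h)]
    simp [D.leibniz, D.leibniz_div, hi, hj, hpred]
  · rw [hC.apply_eq_zero_of_not_isNear h, map_zero]

end IsC2NBracket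

namespace IsS2Bracket

variable {N : ℕ} {bS : RatF N → RatF N → RatF N}

lemma apply_eq_zero (hS : IsS2Bracket N bS) {i j : ZMod N} (h₁ : j ≠ i + 1) (h₂ : j ≠ i - 1) :
    bS (Bgen N i) (Bgen N j) = 0 := by
  rw [hS.apply_Bgen, if_neg (Ne.symm h₁), if_neg (Ne.symm h₂), sub_zero, zero_smul]

lemma apply_of_eq_add_one (hS : IsS2Bracket N bS) (hN : 5 ≤ N) {i j : ZMod N}
    (hj : j = i + 1) : bS (Bgen N i) (Bgen N j) = Bgen N i * Bgen N j := by
  have hpred : i - 1 ≠ j := by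
    rw [hj, Ne, sub_eq_add_neg, add_right_inj]
    exact_mod_cast ZMod.intCast_ne_intCast_of_abs_sub_lt (N := N) (d := -1) (e := 1)
      (by norm_num) (by norm_num; omega)
  rw [hS.apply_Bgen, if_pos hj.symm, if_neg hpred, sub_zero, one_smul]

lemma apply_eq_zero_of_eq_add (hS : IsS2Bracket N bS) (hN : 5 ≤ N) {i j : ZMod N} (d : ℤ)
    (hj : j = i + d) (hd : 2 ≤ |d| ∧ |d| ≤ 3) : bS (Bgen N i) (Bgen N j) = 0 := by
  have h₁ := ne_add_of_eq_add (e := 1) hj (by grind) (by grind)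
  have h₂ := ne_add_of_eq_add (e := -1) hj (by grind) (by grind)
  push_cast at h₁ h₂
  exact hS.apply_eq_zero h₁ (by rwa [sub_eq_add_neg])

end IsS2Bracket

section GeneratorTriples

variable {N : ℕ} {bC bS : RatF N → RatF N → RatF N}

lemma mixedJacobiator_Bgen_one_one (hN : 5 ≤ N) (hC : IsC2NBracket N bC)
    (hS : IsS2Bracket N bS) {i j k : ZMod N} (hj : j = i + 1) (hk : k = i + 2) :
    mixedJacobiator bC bS (Bgen N i) (Bgen N j) (Bgen N k) = 0 := by
  subst hj hk
  exact mixedJacobiator_window_one_one hC.toIsBiderivation hS.toIsBiderivation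
    (Bgen_ne_zero N _) (hS.apply_of_eq_add_one hN rfl) (hS.apply_of_eq_add_one hN (by ring))
    (hS.apply_eq_zero_of_eq_add hN (-2) (by push_cast; ring) (by norm_num))
    (hC.apply_succ i) (hC.apply_of_eq_add_one (by ring)) (hC.apply_add_two i)

/-- `t = 1` exactly when `N = 5`, where `i = (i + 3) + 2`; otherwise `t = 0`. -/
lemma IsC2NBracket.exists_apply_add_three (hN : 5 ≤ N) (hC : IsC2NBracket N bC) (i : ZMod N) :
    ∃ t : ℝ, bC (Bgen N (i + 3)) (Bgen N i) =
      t • (-(Bgen N (i + 3) * Bgen N i) / Bgen N (i + 4)) := by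
  by_cases h5 : (5 : ZMod N) = 0
  · exact ⟨1, by rw [one_smul]; exact hC.apply_of_eq_add_two (by linear_combination -h5) (by ring)⟩
  · refine ⟨0, ?_⟩
    rw [zero_smul]
    refine hC.apply_eq_zero_of_not_isNear ?_
    rw [isNear_sub_comm, add_sub_cancel_left]
    exact not_isNear_three hN h5

lemma mixedJacobiator_Bgen_one_two (hN : 5 ≤ N) (hC : IsC2NBracket N bC)
    (hS : IsS2Bracket N bS) {i j k : ZMod N} (hj : j = i + 1) (hk : k = i + 3) :
    mixedJacobiator bC bS (Bgen N i) (Bgen N j) (Bgen N k) = 0 := by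
  subst hj hk
  obtain ⟨t, czx⟩ := hC.exists_apply_add_three hN i
  exact mixedJacobiator_window_one_two hC.toIsBiderivation hS.toIsBiderivation
    (m := Bgen N (i + 2)) (Bgen_ne_zero N _) (Bgen_ne_zero N _) t
    (hS.apply_of_eq_add_one hN rfl)
    (hS.apply_eq_zero_of_eq_add hN 2 (by push_cast; ring) (by norm_num))
    (hS.apply_eq_zero_of_eq_add hN (-3) (by push_cast; ring) (by norm_num))
    (hS.apply_eq_zero_of_eq_add hN (-2) (by push_cast; ring) (by norm_num))
    (hS.apply_eq_zero_of_eq_add hN (-3) (by push_cast; ring) (by norm_num))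
    (hC.apply_succ i) (hC.apply_of_eq_add_two (by ring) (by ring)) czx

lemma mixedJacobiator_Bgen_two_one (hN : 5 ≤ N) (hC : IsC2NBracket N bC)
    (hS : IsS2Bracket N bS) {i j k : ZMod N} (hj : j = i + 2) (hk : k = i + 3) :
    mixedJacobiator bC bS (Bgen N i) (Bgen N j) (Bgen N k) = 0 := by
  subst hj hk
  obtain ⟨t, czx⟩ := hC.exists_apply_add_three hN i
  exact mixedJacobiator_window_two_one hC.toIsBiderivation hS.toIsBiderivation
    (m := Bgen N (i + 1)) (Bgen_ne_zero N _) (Bgen_ne_zero N _) t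
    (hS.apply_eq_zero_of_eq_add hN 2 (by push_cast; ring) (by norm_num))
    (hS.apply_of_eq_add_one hN (by ring))
    (hS.apply_eq_zero_of_eq_add hN (-3) (by push_cast; ring) (by norm_num))
    (hS.apply_eq_zero_of_eq_add hN 2 (by push_cast; ring) (by norm_num))
    (hS.apply_eq_zero_of_eq_add hN (-2) (by push_cast; ring) (by norm_num))
    (hC.apply_add_two i) (hC.apply_of_eq_add_one (by ring)) czx

lemma mixedJacobiator_Bgen_two_two (hN : 5 ≤ N) (hC : IsC2NBracket N bC)
    (hS : IsS2Bracket N bS) {i j k : ZMod N} (hj : j = i + 2) (hk : k = i + 4) :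
    mixedJacobiator bC bS (Bgen N i) (Bgen N j) (Bgen N k) = 0 := by
  subst hj hk
  by_cases h5 : (5 : ZMod N) = 0
  · -- for `N = 5` the triple is `(i + 4, i + 5, i + 7)`, of the shape treated above
    rw [← mixedJacobiator_rotate]
    exact mixedJacobiator_Bgen_one_two hN hC hS (by linear_combination -h5)
      (by linear_combination -h5)
  obtain ⟨t, czx⟩ : ∃ t : ℝ, bC (Bgen N (i + 4)) (Bgen N i) =
      t • (-(Bgen N (i + 4) * Bgen N i) / Bgen N (i + 5)) := by
    by_cases h6 : (6 : ZMod N) = 0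
    · exact ⟨1, by rw [one_smul]; exact hC.apply_of_eq_add_two (by linear_combination -h6) (by ring)⟩
    · refine ⟨0, ?_⟩
      rw [zero_smul]
      refine hC.apply_eq_zero_of_not_isNear ?_
      rw [isNear_sub_comm, add_sub_cancel_left]
      exact not_isNear_four hN h5 h6
  exact mixedJacobiator_window_two_two hC.toIsBiderivation hS.toIsBiderivation
    (m := Bgen N (i + 1)) (n := Bgen N (i + 3)) (Bgen_ne_zero N _) (Bgen_ne_zero N _)
    (Bgen_ne_zero N _) t
    (hS.apply_eq_zero_of_eq_add hN 2 (by push_cast; ring) (by norm_num))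
    (hS.apply_eq_zero_of_eq_add hN 2 (by push_cast; ring) (by norm_num))
    (hS.apply_eq_zero (fun h => h5 (by linear_combination -h)) (by
      have h := ne_add_of_eq_add (N := N) (i := i + 4) (d := -4) (e := -1) (by push_cast; ring)
        (by norm_num) (by norm_num; omega)
      push_cast at h
      rwa [← sub_eq_add_neg] at h))
    (hS.apply_eq_zero_of_eq_add hN 3 (by push_cast; ring) (by norm_num))
    (hS.apply_eq_zero_of_eq_add hN (-3) (by push_cast; ring) (by norm_num))
    (hS.apply_eq_zero_of_eq_add hN (-3) (by push_cast; ring) (by norm_num))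
    (hC.apply_add_two i) (hC.apply_of_eq_add_two (by ring) (by ring)) czx

lemma mixedJacobiator_Bgen_chain (hN : 5 ≤ N) (hC : IsC2NBracket N bC)
    (hS : IsS2Bracket N bS) {i j k : ZMod N} {p q : ℤ} (hp : p = 1 ∨ p = 2) (hq : q = 1 ∨ q = 2)
    (hj : j = i + p) (hk : k = j + q) :
    mixedJacobiator bC bS (Bgen N i) (Bgen N j) (Bgen N k) = 0 := by
  rcases hp with rfl | rfl <;> rcases hq with rfl | rfl <;> push_cast at hj hk
  · exact mixedJacobiator_Bgen_one_one hN hC hS hj (by rw [hk, hj]; ring)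
  · exact mixedJacobiator_Bgen_one_two hN hC hS hj (by rw [hk, hj]; ring)
  · exact mixedJacobiator_Bgen_two_one hN hC hS hj (by rw [hk, hj]; ring)
  · exact mixedJacobiator_Bgen_two_two hN hC hS hj (by rw [hk, hj]; ring)

lemma mixedJacobiator_Bgen_of_isNear (hN : 5 ≤ N) (hC : IsC2NBracket N bC)
    (hS : IsS2Bracket N bS) {i j k : ZMod N} (hi : IsNear (i - j)) (hk : IsNear (k - j))
    (hik : i ≠ k) : mixedJacobiator bC bS (Bgen N i) (Bgen N j) (Bgen N k) = 0 := by
  obtain ⟨d₁, hd₁, rfl⟩ := hi.exists_eq_add_intCast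
  obtain ⟨d₂, hd₂, rfl⟩ := hk.exists_eq_add_intCast
  replace hik : d₁ ≠ d₂ := by rintro rfl; exact hik rfl
  clear hi hk
  wlog hlt : d₁ < d₂ generalizing d₁ d₂
  · rw [mixedJacobiator_swap_outer hC.toIsBiderivation hS.toIsBiderivation]
    exact neg_eq_zero.mpr (this d₂ hd₂ d₁ hd₁ hik.symm (by omega))
  rcases (by omega : d₁ < 0 ∧ 0 < d₂ ∨ d₁ = -2 ∧ d₂ = -1 ∨ d₁ = 1 ∧ d₂ = 2) with
    h | ⟨rfl, rfl⟩ | ⟨rfl, rfl⟩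
  · exact mixedJacobiator_Bgen_chain hN hC hS (p := -d₁) (q := d₂) (by omega) (by omega)
      (by push_cast; ring) rfl
  · rw [mixedJacobiator_swap_right hC.toIsBiderivation hS.toIsBiderivation]
    exact neg_eq_zero.mpr <| mixedJacobiator_Bgen_chain hN hC hS (p := 1) (q := 1) (by simp)
      (by simp) (by push_cast; ring) (by push_cast; ring)
  · rw [mixedJacobiator_swap hC.toIsBiderivation hS.toIsBiderivation]
    exact neg_eq_zero.mpr <| mixedJacobiator_Bgen_chain hN hC hS (p := 1) (q := 1) (by simp)
      (by simp) (by push_cast; ring) (by push_cast; ring)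

lemma mixedJacobiator_Bgen_of_not_isNear (hC : IsC2NBracket N bC) (hS : IsS2Bracket N bS)
    {i j k : ZMod N} (hi : ¬IsNear (k - i)) (hj : ¬IsNear (k - j)) (hki : k ≠ i) :
    mixedJacobiator bC bS (Bgen N i) (Bgen N j) (Bgen N k) = 0 := by
  obtain ⟨hi₁, hi₂, hi₃, hi₄⟩ := ne_add_of_not_isNear hi
  obtain ⟨hj₁, hj₂, -, -⟩ := ne_add_of_not_isNear hj
  have sik := hS.apply_eq_zero hi₁ hi₂
  have hSC : bS (bC (Bgen N i) (Bgen N j)) (Bgen N k) = 0 :=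
    hC.derivation_apply_eq_zero (hS.toDerivation (Bgen N k))
      (hS.apply_eq_zero (by rwa [sub_add_cancel]) (by rwa [sub_sub, one_add_one_eq_two]))
      sik
      (hS.apply_eq_zero (by rwa [add_assoc, one_add_one_eq_two]) (by rwa [add_sub_cancel_right]))
      (hS.apply_eq_zero hj₁ hj₂)
  simp only [mixedJacobiator, hS.apply_Bgen i j, hS.apply_eq_zero hj₁ hj₂,
    hS.apply_swap_eq sik, hC.apply_eq_zero_of_not_isNear hi, hC.apply_eq_zero_of_not_isNear hj,
    hC.apply_swap_eq (hC.apply_eq_zero_of_not_isNear hi), hSC, hC.smul_left, hC.mul_left,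
    hC.zero_left, hS.zero_left, neg_zero]
  simp

lemma mixedJacobiator_Bgen (hN : 5 ≤ N) (hC : IsC2NBracket N bC) (hS : IsS2Bracket N bS)
    (i j k : ZMod N) : mixedJacobiator bC bS (Bgen N i) (Bgen N j) (Bgen N k) = 0 := by
  have hC' := hC.toIsBiderivation
  have hS' := hS.toIsBiderivation
  by_cases hij : i = j
  · subst hij
    exact mixedJacobiator_self hC' hS' _ _
  by_cases hjk : j = k
  · subst hjk
    rw [mixedJacobiator_rotate]
    exact mixedJacobiator_self hC' hS' _ _
  by_cases hik : i = k
  · subst hik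
    rw [← mixedJacobiator_rotate]
    exact mixedJacobiator_self hC' hS' _ _
  -- either some index is near both others, or some index is near neither
  by_cases eki : IsNear (k - i)
  · by_cases eij : IsNear (i - j)
    · rw [← mixedJacobiator_rotate]
      exact mixedJacobiator_Bgen_of_isNear hN hC hS eki (isNear_sub_comm.mp eij) (Ne.symm hjk)
    by_cases ejk : IsNear (k - j)
    · rw [mixedJacobiator_rotate]
      exact mixedJacobiator_Bgen_of_isNear hN hC hS (isNear_sub_comm.mp ejk)
        (isNear_sub_comm.mp eki) (Ne.symm hij)
    · rw [← mixedJacobiator_rotate]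
      exact mixedJacobiator_Bgen_of_not_isNear hC hS (mt isNear_sub_comm.mp ejk)
        (mt isNear_sub_comm.mp eij) hjk
  by_cases ejk : IsNear (k - j)
  · by_cases eij : IsNear (i - j)
    · exact mixedJacobiator_Bgen_of_isNear hN hC hS eij ejk hik
    · rw [mixedJacobiator_rotate]
      exact mixedJacobiator_Bgen_of_not_isNear hC hS eij (mt isNear_sub_comm.mp eki) hij
  · exact mixedJacobiator_Bgen_of_not_isNear hC hS eki ejk (Ne.symm hik)

end GeneratorTriples

theorem lambda_bracket_jacobi (N : ℕ) (hN : 5 ≤ N)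
    (bC bS : RatF N → RatF N → RatF N)
    -- `{·,·}_{C2N}` is ℝ-bilinear, antisymmetric, and a derivation in each argument
    (hC_add : ∀ x y z : RatF N, bC (x + y) z = bC x z + bC y z)
    (hC_smul : ∀ (c : ℝ) (x y : RatF N), bC (c • x) y = c • bC x y)
    (hC_anti : ∀ x y : RatF N, bC x y = - bC y x)
    (hC_leib : ∀ x y z : RatF N, bC (x * y) z = x * bC y z + y * bC x z)
    -- values of `{·,·}_{C2N}` on the generators
    (hC_gen1 : ∀ k : ZMod N,
      bC (Bgen N k) (Bgen N (k + 1)) =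
        Bgen N k * Bgen N (k + 1) - Bgen N k - Bgen N (k + 1))
    (hC_gen2 : ∀ k : ZMod N,
      bC (Bgen N k) (Bgen N (k + 2)) =
        - (Bgen N k * Bgen N (k + 2)) / Bgen N (k + 1))
    (hC_gen0 : ∀ i j : ZMod N,
      j - i ≠ 1 → j - i ≠ -1 → j - i ≠ 2 → j - i ≠ -2 → bC (Bgen N i) (Bgen N j) = 0)
    -- `{·,·}_{S2}` is ℝ-bilinear, antisymmetric, and a derivation in each argument
    (hS_add : ∀ x y z : RatF N, bS (x + y) z = bS x z + bS y z)
    (hS_smul : ∀ (c : ℝ) (x y : RatF N), bS (c • x) y = c • bS x y)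
    (hS_anti : ∀ x y : RatF N, bS x y = - bS y x)
    (hS_leib : ∀ x y z : RatF N, bS (x * y) z = x * bS y z + y * bS x z)
    -- values of `{·,·}_{S2}` on the generators
    (hS_gen : ∀ i j : ZMod N,
      bS (Bgen N i) (Bgen N j) =
        ((if i + 1 = j then (1 : ℝ) else 0) - (if i - 1 = j then (1 : ℝ) else 0)) •
          (Bgen N i * Bgen N j))
    -- each bracket satisfies the Jacobi identity
    (hC_jac : ∀ x y z : RatF N, bC (bC x y) z + bC (bC y z) x + bC (bC z x) y = 0)
    (hS_jac : ∀ x y z : RatF N, bS (bS x y) z + bS (bS y z) x + bS (bS z x) y = 0) :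
    ∀ l : ℝ, ∀ f g h : RatF N,
      (bC (bC f g + l • bS f g) h + l • bS (bC f g + l • bS f g) h) +
      (bC (bC g h + l • bS g h) f + l • bS (bC g h + l • bS g h) f) +
      (bC (bC h f + l • bS h f) g + l • bS (bC h f + l • bS h f) g) = 0 := by
  intro l f g h
  have hC : IsC2NBracket N bC :=
    ⟨⟨hC_add, hC_smul, hC_anti, hC_leib⟩, hC_gen1, hC_gen2, hC_gen0⟩
  have hS : IsS2Bracket N bS := ⟨⟨hS_add, hS_smul, hS_anti, hS_leib⟩, hS_gen⟩
  have hM := mixedJacobiator_eq_zero_of_generators hC.toIsBiderivation hS.toIsBiderivation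
    (Bgen N) MvPolynomial.derivation_fractionRing_ext (mixedJacobiator_Bgen hN hC hS) f g h
  change jacobiator (fun x y => bC x y + l • bS x y) f g h = 0
  rw [jacobiator_add_smul hC.toIsBiderivation hS.toIsBiderivation, hM,
    show jacobiator bC f g h = 0 from hC_jac f g h, show jacobiator bS f g h = 0 from hS_jac f g h]
  simp
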